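/- For 0 <= rho < 1, the limit as n -> infinity of c_n = rho^{2n+1} + P_{n-1}(001) equals rho(rho^3 - rho + 1)/(rho^3 + rho^2 + rho + 1), where P_{n-1}(001) is the weighted sum over the (n-1)-step preimages of 001 under rule 130 with weight rho^{#ones}(1-rho)^{#zeros}. -/
import Mathlib

/-- Local rule of elementary CA 130: f(x,y,z)=1 iff (x,y,z)=(0,0,1) or (1,1,1). -/
def f130 (x y z : Bool) : Bool := (!x && !y && z) || (x && y && z)

/-- Block evolution operator: maps a_0...a_{m-1} to the length m-2 string with
entries f(a_i,a_{i+1},a_{i+2}). -/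
def bstep (a : List Bool) : List Bool :=
  (List.range (a.length - 2)).map
    (fun i => f130 (a.getD i false) (a.getD (i+1) false) (a.getD (i+2) false))

/-- n-step preimage set of a length-3 block b: binary strings of length 2n+3
mapped to b by n applications of the block evolution operator. -/
def preim (n : ℕ) (b : List Bool) : Set (List Bool) :=
  {a | a.length = 2*n+3 ∧ bstep^[n] a = b}

/-- Probability of a block in a Bernoulli(ρ) product measure. -/
noncomputable def wt (ρ : ℝ) (a : List Bool) : ℝ :=
  ρ ^ (a.count true) * (1 - ρ) ^ (a.count false)

lemma bstep_length (a : List Bool) : (bstep a).length = a.length - 2 := by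
  simp [bstep]

lemma bstep_small (a : List Bool) (h : a.length ≤ 2) : bstep a = [] := by
  simp [bstep, Nat.sub_eq_zero_of_le h]

lemma bstep_cons (x y z : Bool) (l : List Bool) :
    bstep (x::y::z::l) = f130 x y z :: bstep (y::z::l) := by
  simp only [bstep, List.length_cons]
  have : l.length + 1 + 1 + 1 - 2 = (l.length + 1 + 1 - 2) + 1 := by omega
  rw [this, List.range_succ_eq_map, List.map_cons, List.map_map]
  simp [Function.comp, List.getD_cons_succ, List.getD_cons_zero]

lemma bstep_append (u v : List Bool) (hv : 2 ≤ v.length) :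
    bstep (u ++ v) = bstep (u ++ v.take 2) ++ bstep v := by
  induction u with
  | nil =>
    simp [bstep_small (v.take 2) (by simp)]
  | cons a u IH =>
    obtain ⟨p, q, t, rfl⟩ : ∃ p q t, v = p::q::t := by
      match v, hv with
      | p::q::t, _ => exact ⟨p, q, t, rfl⟩
    match u with
    | [] => simp [bstep_cons, bstep_small]
    | [b] => simp [bstep_cons] at IH ⊢; rw [IH]
    | b::c::u' =>
      simp only [List.cons_append, bstep_cons] at IH ⊢
      rw [IH]

lemma bstep_three (x y z : Bool) : bstep [x,y,z] = [f130 x y z] := by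
  rw [bstep_cons]; simp [bstep_small]

lemma bstep_snoc3 (u : List Bool) (x y z : Bool) :
    bstep (u ++ [x,y,z]) = bstep (u ++ [x,y]) ++ [f130 x y z] := by
  have := bstep_append u [x,y,z] (by simp)
  simpa [bstep_three] using this

lemma exists_concat_pair (w : List Bool) (h : 2 ≤ w.length) :
    ∃ u x y, w = u ++ [x,y] := by
  rcases w.eq_nil_or_concat with rfl | ⟨u, y, rfl⟩
  · simp at h
  rcases u.eq_nil_or_concat with rfl | ⟨u', x, rfl⟩
  · simp at h
  exact ⟨u', x, y, by simp⟩

lemma f130_false (x y : Bool) : f130 x y false = false := by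
  cases x <;> cases y <;> rfl

lemma bstep_snoc_false (w : List Bool) (h : 2 ≤ w.length) :
    bstep (w ++ [false]) = bstep w ++ [false] := by
  obtain ⟨u, x, y, rfl⟩ := exists_concat_pair w h
  have : u ++ [x,y] ++ [false] = u ++ [x,y,false] := by simp
  rw [this, bstep_snoc3, f130_false]

lemma bstep_replicate (m : ℕ) :
    bstep (List.replicate (m+2) true) = List.replicate m true := by
  induction m with
  | zero => exact bstep_small _ (by simp)
  | succ m IH =>
    have h : List.replicate (m+3) true = true :: true :: true :: List.replicate m true := by
      simp [List.replicate_succ]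
    have h2 : List.replicate (m+2) true = true :: true :: List.replicate m true := by
      simp [List.replicate_succ]
    rw [show m+1+2 = m+3 from rfl, h, bstep_cons, ← h2, IH]
    simp [List.replicate_succ]; rfl

def cfx (k : ℕ) : List Bool := if k % 2 = 1 then [true, false] else [false, false]

def s (k : ℕ) : List Bool := cfx k ++ List.replicate (2*k+1) true

lemma s_length (k : ℕ) : (s k).length = 2*k+3 := by
  simp [s, cfx]; split <;> simp <;> omega

lemma s_zero : s 0 = [false, false, true] := rfl

lemma s_take2 (k : ℕ) : (s (k+1)).take 2 = cfx (k+1) := by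
  simp [s, cfx]; split <;> rfl

lemma bstep_cfx_tt (k : ℕ) : bstep (cfx (k+1) ++ [true, true]) = cfx k := by
  rcases Nat.even_or_odd k with hk | hk
  · have h1 : k % 2 = 0 := Nat.even_iff.mp hk
    have h2 : (k+1) % 2 = 1 := by omega
    simp only [cfx, h1, h2]
    norm_num
    decide
  · have h1 : k % 2 = 1 := Nat.odd_iff.mp hk
    have h2 : (k+1) % 2 = 0 := by omega
    simp only [cfx, h1, h2]
    norm_num
    decide

lemma s_succ_decomp (k : ℕ) : s (k+1) = cfx (k+1) ++ List.replicate (2*k+3) true := by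
  simp only [s]
  rw [show 2*(k+1)+1 = 2*k+3 by ring]

lemma bstep_s_succ (k : ℕ) : bstep (s (k+1)) = s k := by
  rw [s_succ_decomp, bstep_append _ _ (by simp)]
  rw [show (2:ℕ)*k+3 = (2*k+1)+2 by ring, bstep_replicate]
  rw [List.take_replicate]
  rw [show min 2 (2*k+1+2) = 2 by omega]
  rw [show List.replicate 2 true = [true, true] from rfl, bstep_cfx_tt]
  rfl

lemma bstep_w_s_succ (w : List Bool) (k : ℕ) :
    bstep (w ++ s (k+1)) = bstep (w ++ cfx (k+1)) ++ s k := by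
  rw [bstep_append _ _ (by rw [s_length]; omega), s_take2, bstep_s_succ]

lemma bstep_w_s0 (w : List Bool) (h : 2 ≤ w.length) :
    bstep (w ++ s 0) = bstep w ++ s 0 := by
  rw [s_zero, show [false, false, true] = [false, false] ++ [true] from rfl,
    ← List.append_assoc]
  obtain ⟨u, x, y, rfl⟩ := exists_concat_pair w h
  rw [show u ++ [x,y] ++ [false, false] ++ [true] = (u ++ [x]) ++ [y, false, false] ++ [true] by simp,
    show (u ++ [x]) ++ [y, false, false] = (u ++ [x]) ++ [y, false] ++ [false] by simp]
  rw [show (u ++ [x]) ++ [y, false] ++ [false] ++ [true] = (u ++ [x,y]) ++ [false,false,true] by simp]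
  rw [bstep_snoc3]
  rw [show (u ++ [x,y]) ++ [false, false] = (u ++ [x]) ++ [y, false, false] by simp, bstep_snoc3]
  rw [show (u ++ [x]) ++ [y, false] = u ++ [x, y, false] by simp, bstep_snoc3]
  simp [f130_false]
  rfl

lemma forward (n : ℕ) : ∀ k w, k ≤ n → w.length = 2*(n-k) →
    bstep^[n] (w ++ s k) = [false, false, true] := by
  induction n with
  | zero =>
    intro k w hk hw
    interval_cases k
    simp at hw
    subst hw
    simp [s_zero]
  | succ n IH =>
    intro k w hk hw
    rw [Function.iterate_succ_apply]
    match k with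
    | 0 =>
      have h2 : 2 ≤ w.length := by omega
      rw [bstep_w_s0 w h2]
      exact IH 0 (bstep w) (by omega) (by rw [bstep_length]; omega)
    | (k+1) =>
      rw [bstep_w_s_succ]
      refine IH k _ (by omega) ?_
      rw [bstep_length]
      simp [cfx]
      split <;> simp <;> omega

lemma bstep_len_eq {a b : List Bool} (h : bstep a = b) (hb : b ≠ []) :
    a.length = b.length + 2 := by
  have hl := bstep_length a
  rw [h] at hl
  by_cases h2 : a.length ≤ 2
  · rw [bstep_small a h2] at h; exact absurd h.symm hb
  · omega

lemma rep_take2 (m : ℕ) : (List.replicate (m+2) true).take 2 = [true, true] := by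
  rw [List.take_replicate, show min 2 (m+2) = 2 by omega]; rfl

lemma bstep_snoc4 (u : List Bool) (p q : Bool) :
    bstep (u ++ [p,q,true,true]) = (bstep (u ++ [p,q]) ++ [f130 p q true]) ++ [f130 q true true] := by
  rw [show u ++ [p,q,true,true] = (u ++ [p]) ++ [q,true,true] by simp, bstep_snoc3,
      show (u ++ [p]) ++ [q,true] = u ++ [p,q,true] by simp, bstep_snoc3]

lemma claim2 (b a : List Bool) (h : bstep a = b ++ [true, true]) :
    ∃ u, u.length = b.length ∧ a = u ++ [true, true, true, true] := by
  have hlen : a.length = b.length + 4 := by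
    have := bstep_len_eq h (by simp); simpa using this
  obtain ⟨u, y, z, rfl⟩ := exists_concat_pair a (by omega)
  obtain ⟨u', w, x, rfl⟩ := exists_concat_pair u (by simp at hlen ⊢; omega)
  rw [show u' ++ [w,x] ++ [y,z] = (u' ++ [w]) ++ [x,y,z] by simp, bstep_snoc3,
      show (u' ++ [w]) ++ [x,y] = u' ++ [w,x,y] by simp, bstep_snoc3] at h
  rw [show b ++ [true, true] = (b ++ [true]) ++ [true] by simp] at h
  obtain ⟨h1, h2⟩ := List.append_inj' h (by simp)
  obtain ⟨h3, h4⟩ := List.append_inj' h1 (by simp)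
  have hw : w = true ∧ x = true ∧ y = true ∧ z = true := by
    revert h4 h2; cases w <;> cases x <;> cases y <;> cases z <;> simp [f130]
  obtain ⟨rfl, rfl, rfl, rfl⟩ := hw
  refine ⟨u', ?_, by simp⟩
  simp at hlen; omega

lemma run_lemma : ∀ m b a, bstep a = b ++ List.replicate (m+2) true →
    ∃ u, u.length = b.length ∧ a = u ++ List.replicate (m+4) true := by
  intro m
  induction m with
  | zero =>
    intro b a h
    obtain ⟨u, hu, rfl⟩ := claim2 b a (by simpa using h)
    exact ⟨u, hu, by norm_num [List.replicate_succ]⟩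
  | succ m IH =>
    intro b a h
    rw [show List.replicate (m+1+2) true = [true] ++ List.replicate (m+2) true by simp [List.replicate_succ],
      ← List.append_assoc] at h
    obtain ⟨u, hu, rfl⟩ := IH (b ++ [true]) a h
    obtain (rfl | ⟨u', x, rfl⟩) := u.eq_nil_or_concat
    · simp at hu
    simp only [List.concat_eq_append] at hu h ⊢
    rw [bstep_append _ _ (by simp), rep_take2, show (m+4:ℕ) = (m+2)+2 from rfl,
      bstep_replicate] at h
    obtain ⟨h1, -⟩ := List.append_inj' h (by simp)
    rw [show u' ++ [x] ++ [true, true] = u' ++ [x, true, true] by simp, bstep_snoc3] at h1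
    obtain ⟨h3, h4⟩ := List.append_inj' h1 (by simp)
    have hx : x = true := by revert h4; cases x <;> simp [f130]
    subst hx
    refine ⟨u', ?_, by simp [List.replicate_succ]⟩
    have hlen := bstep_length (u' ++ [true, true])
    rw [h3] at hlen; simp at hlen hu; omega

lemma cfx_length (k : ℕ) : (cfx k).length = 2 := by
  unfold cfx; split <;> rfl

lemma cfx_snd (k : ℕ) : ∃ c, cfx k = [c, false] := by
  unfold cfx; split
  · exact ⟨true, rfl⟩
  · exact ⟨false, rfl⟩

lemma stepback (k : ℕ) (b a : List Bool) (h : bstep a = b ++ s k) :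
    (∃ u, u.length = b.length + 2 ∧ a = u ++ s k) ∨
    (∃ u, u.length = b.length ∧ a = u ++ s (k+1)) := by
  match k with
  | 0 =>
    rw [s_zero] at h
    have hlen : a.length = b.length + 5 := by
      have := bstep_len_eq h (by simp); simp at this; omega
    obtain ⟨u, y, z, rfl⟩ := exists_concat_pair a (by omega)
    obtain ⟨u', x, rfl⟩ : ∃ u' x, u = u' ++ [x] := by
      rcases u.eq_nil_or_concat with rfl | ⟨u', x, rfl⟩
      · exfalso
        have h2 : (2:ℕ) = b.length + 5 := by simpa using hlen
        omega
      · exact ⟨u', x, by simp⟩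
    have hul : u'.length + 3 = b.length + 5 := by
      simpa using hlen
    rw [show u' ++ [x] ++ [y, z] = u' ++ [x,y,z] by simp, bstep_snoc3,
      show b ++ [false, false, true] = (b ++ [false, false]) ++ [true] by simp] at h
    obtain ⟨h1, h2⟩ := List.append_inj' h (by simp)
    simp only [List.cons.injEq, and_true] at h2
    have hxyz : (x = false ∧ y = false ∧ z = true) ∨ (x = true ∧ y = true ∧ z = true) := by
      cases x <;> cases y <;> cases z <;> simp_all [f130]
    rcases hxyz with ⟨rfl, rfl, rfl⟩ | ⟨rfl, rfl, rfl⟩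
    · left
      exact ⟨u', by omega, by rw [s_zero]; simp⟩
    · right
      obtain ⟨u'', p, q, rfl⟩ := exists_concat_pair u' (by omega)
      rw [show u'' ++ [p, q] ++ [true, true] = u'' ++ [p,q,true,true] by simp,
        bstep_snoc4] at h1
      rw [show b ++ [false, false] = (b ++ [false]) ++ [false] by simp] at h1
      obtain ⟨h3, h4⟩ := List.append_inj' h1 (by simp)
      obtain ⟨h5, h6⟩ := List.append_inj' h3 (by simp)
      simp only [List.cons.injEq, and_true] at h4 h6
      have hpq : p = true ∧ q = false := by
        cases p <;> cases q <;> simp_all [f130]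
      obtain ⟨rfl, rfl⟩ := hpq
      refine ⟨u'', by simp at hul; omega, ?_⟩
      show _ = u'' ++ s 1
      simp [s, cfx, List.replicate_succ]
  | (k+1) =>
    rw [s_succ_decomp, ← List.append_assoc,
      show (2:ℕ)*k+3 = (2*k+1)+2 from rfl] at h
    obtain ⟨u, hu, rfl⟩ := run_lemma (2*k+1) _ a h
    rw [List.length_append, cfx_length] at hu
    obtain ⟨u'', p, q, rfl⟩ := exists_concat_pair u (by omega)
    rw [bstep_append _ _ (by simp), rep_take2,
      show (2:ℕ)*k+1+4 = (2*k+3)+2 from rfl, bstep_replicate] at h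
    obtain ⟨h1, -⟩ := List.append_inj' h (by simp)
    rw [show u'' ++ [p,q] ++ [true, true] = u'' ++ [p,q,true,true] by simp,
      bstep_snoc4] at h1
    obtain ⟨c, hc⟩ := cfx_snd (k+1)
    rw [hc, show b ++ [c, false] = (b ++ [c]) ++ [false] by simp] at h1
    obtain ⟨h3, h4⟩ := List.append_inj' h1 (by simp)
    obtain ⟨h5, h6⟩ := List.append_inj' h3 (by simp)
    simp only [List.cons.injEq, and_true] at h4 h6
    have hq : q = false := by cases q <;> simp_all [f130]
    subst hq
    have hp : p = !c := by cases p <;> cases c <;> simp_all [f130]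
    subst hp
    right
    refine ⟨u'', by simp at hu; omega, ?_⟩
    have hcfx : cfx (k+2) = [!c, false] := by
      rcases Nat.even_or_odd k with hk | hk
      · have hk' : k % 2 = 0 := Nat.even_iff.mp hk
        rw [cfx, if_pos (by omega)] at hc
        rw [cfx, if_neg (by omega)]
        simp only [List.cons.injEq, and_true] at hc
        simp [← hc]
      · have hk' : k % 2 = 1 := Nat.odd_iff.mp hk
        rw [cfx, if_neg (by omega)] at hc
        rw [cfx, if_pos (by omega)]
        simp only [List.cons.injEq, and_true] at hc
        simp [← hc]
    rw [show s (k+2) = cfx (k+2) ++ List.replicate (2*(k+1)+3) true from s_succ_decomp (k+1), hcfx]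
    simp [show 2*(k+1)+3 = 2*k+5 by ring, show (2:ℕ)*k+1+4 = 2*k+5 by ring]

lemma backward : ∀ n a, a.length = 2*n+3 → bstep^[n] a = [false, false, true] →
    ∃ k, k ≤ n ∧ ∃ w, w.length = 2*(n-k) ∧ a = w ++ s k := by
  intro n
  induction n with
  | zero =>
    intro a _ h
    exact ⟨0, le_refl 0, [], by simp, by simpa [s_zero] using h⟩
  | succ n IH =>
    intro a ha h
    rw [Function.iterate_succ_apply] at h
    obtain ⟨k, hk, w, hw, hba⟩ := IH (bstep a) (by rw [bstep_length]; omega) h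
    rcases stepback k w a hba with ⟨u, hu, rfl⟩ | ⟨u, hu, rfl⟩
    · exact ⟨k, by omega, u, by omega, rfl⟩
    · exact ⟨k+1, by omega, u, by omega, rfl⟩

def strs : ℕ → Finset (List Bool)
  | 0 => {[]}
  | (m+1) => ((strs m).image (List.cons false)) ∪ ((strs m).image (List.cons true))

lemma mem_strs (m : ℕ) (w : List Bool) : w ∈ strs m ↔ w.length = m := by
  induction m generalizing w with
  | zero => cases w <;> simp [strs]
  | succ m IH =>
    cases w with
    | nil => simp [strs]
    | cons x t =>
      simp only [strs, Finset.mem_union, Finset.mem_image]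
      constructor
      · rintro (⟨a, ha, heq⟩ | ⟨a, ha, heq⟩) <;> cases heq <;> simp [(IH _).mp ha]
      · intro hlen
        simp at hlen
        cases x
        · exact Or.inl ⟨t, (IH t).mpr hlen, rfl⟩
        · exact Or.inr ⟨t, (IH t).mpr hlen, rfl⟩

noncomputable def E (n : ℕ) : Finset (List Bool) :=
  (Finset.range (n+1)).biUnion (fun k => (strs (2*(n-k))).image (· ++ s k))

lemma preim_eq (n : ℕ) :
    preim n [false, false, true] = ↑(E n) := by
  ext a
  simp only [preim, Set.mem_setOf_eq, E, Finset.coe_biUnion, Finset.mem_coe,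
    Finset.mem_biUnion, Finset.mem_range, Finset.mem_image, Set.mem_iUnion]
  constructor
  · rintro ⟨ha, hb⟩
    obtain ⟨k, hk, w, hw, rfl⟩ := backward n a ha hb
    exact ⟨k, by omega, ⟨w, (mem_strs _ w).mpr hw, rfl⟩⟩
  · rintro ⟨k, hk, w, hw, rfl⟩
    rw [mem_strs] at hw
    have hk' : k ≤ n := by omega
    constructor
    · rw [List.length_append, s_length, hw]; omega
    · exact forward n k w hk' hw

lemma wt_append (ρ : ℝ) (a b : List Bool) : wt ρ (a ++ b) = wt ρ a * wt ρ b := by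
  simp [wt, List.count_append, pow_add]; ring

lemma sum_strs (ρ : ℝ) (m : ℕ) : ∑ w ∈ strs m, wt ρ w = 1 := by
  induction m with
  | zero => simp [strs, wt]
  | succ m IH =>
    rw [strs, Finset.sum_union, Finset.sum_image (by intro x _ y _ h; simpa using h),
      Finset.sum_image (by intro x _ y _ h; simpa using h)]
    · have h1 : ∀ w : List Bool, wt ρ (false :: w) = (1-ρ) * wt ρ w := by
        intro w; simp [wt, List.count_cons, pow_succ]; ring
      have h2 : ∀ w : List Bool, wt ρ (true :: w) = ρ * wt ρ w := by
        intro w; simp [wt, List.count_cons, pow_succ]; ring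
      simp only [h1, h2, ← Finset.mul_sum, IH]; ring
    · rw [Finset.disjoint_left]
      rintro x hx hy
      simp only [Finset.mem_image] at hx hy
      obtain ⟨a, -, rfl⟩ := hx
      obtain ⟨b, -, hb⟩ := hy
      simp at hb

lemma s_k_eq_append (k j : ℕ) (w w' : List Bool) (hkj : k < j) :
    w ++ s k ≠ w' ++ s j := by
  intro heq
  have hlen : (s k).length ≤ (s j).length := by rw [s_length, s_length]; omega
  have hlenw : w'.length ≤ w.length := by
    have := congrArg List.length heq
    simp only [List.length_append, s_length] at this; omega
  -- s k is a suffix of s j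
  obtain ⟨t, ht⟩ : ∃ t, t ++ s k = s j := by
    have h1 : w.drop w'.length ++ s k = s j := by
      have := congrArg (List.drop w'.length) heq
      rw [List.drop_append_of_le_length hlenw, List.drop_left] at this
      exact this
    exact ⟨_, h1⟩
  have htlen : t.length = 2*(j-k) := by
    have := congrArg List.length ht
    simp only [List.length_append, s_length] at this; omega
  have hdrop : s k = (s j).drop t.length := by rw [← ht, List.drop_left]
  rw [htlen] at hdrop
  have h2 : (s j).drop (2*(j-k)) = List.replicate (2*k+3) true := by
    rcases j with _ | j
    · omega
    rw [s_succ_decomp]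
    rw [show 2*((j+1)-k) = 2 + (2*(j-k)) by omega]
    rw [show cfx (j+1) ++ List.replicate (2*j+3) true
        = (cfx (j+1) ++ List.replicate (2*j+3) true) from rfl]
    rw [List.drop_append]
    rw [cfx_length, show (2 + 2*(j-k)) - 2 = 2*(j-k) by omega]
    rw [List.drop_replicate]
    simp [cfx_length, List.drop_eq_nil_of_le, show (2*j+3) - 2*(j-k) = 2*k+3 by omega]
  rw [h2] at hdrop
  obtain ⟨c, hc⟩ := cfx_snd k
  rw [s, hc] at hdrop
  have hrep : List.replicate (2*k+3) true = true :: true :: List.replicate (2*k+1) true := by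
    rw [show (2:ℕ)*k+3 = 2+(2*k+1) by ring, List.replicate_add]
    rfl
  rw [hrep] at hdrop
  simp at hdrop

lemma sum_E (ρ : ℝ) (n : ℕ) :
    ∑ a ∈ E n, wt ρ a = ∑ k ∈ Finset.range (n+1), wt ρ (s k) := by
  rw [E, Finset.sum_biUnion]
  · refine Finset.sum_congr rfl fun k _ => ?_
    rw [Finset.sum_image (by intro x _ y _ h; exact List.append_cancel_right h)]
    simp only [wt_append, ← Finset.sum_mul, sum_strs, one_mul]
  · intro i hi j hj hij
    apply Finset.disjoint_left.mpr
    rintro x hx hy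
    simp only [Finset.mem_image] at hx hy
    obtain ⟨a, -, rfl⟩ := hx
    obtain ⟨b, -, hb⟩ := hy
    rcases lt_or_gt_of_ne hij with h | h
    · exact s_k_eq_append i j a b h hb.symm
    · exact s_k_eq_append j i b a h hb

lemma wt_s (ρ : ℝ) (k : ℕ) :
    wt ρ (s k) = if k % 2 = 1 then ρ^(2*k+2)*(1-ρ) else ρ^(2*k+1)*(1-ρ)^2 := by
  rcases Nat.even_or_odd k with hk | hk
  · have h1 : k % 2 = 0 := Nat.even_iff.mp hk
    rw [if_neg (by omega)]
    rw [s, cfx, if_neg (by omega)]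
    simp [wt, List.count_append, List.count_replicate, List.count_cons]
  · have h1 : k % 2 = 1 := Nat.odd_iff.mp hk
    rw [if_pos h1, s, cfx, if_pos h1]
    simp [wt, List.count_append, List.count_replicate, List.count_cons]


lemma hasSum_wt_s (ρ : ℝ) (h0 : 0 ≤ ρ) (h1 : ρ < 1) :
    HasSum (fun k => wt ρ (s k)) (ρ * (ρ^3 - ρ + 1) / (ρ^3 + ρ^2 + ρ + 1)) := by
  have hr4 : ρ^4 < 1 := pow_lt_one₀ h0 h1 (by norm_num)
  have hr4' : (0:ℝ) ≤ ρ^4 := by positivity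
  have hg := hasSum_geometric_of_lt_one hr4' hr4
  have he : HasSum (fun i => wt ρ (s (2*i))) (ρ*(1-ρ)^2 * (1-ρ^4)⁻¹) := by
    refine (hg.mul_left (ρ*(1-ρ)^2)).congr_fun fun i => ?_
    rw [wt_s, if_neg (by omega), show 2*(2*i)+1 = 4*i+1 by ring, pow_add, pow_mul, pow_one]
    ring
  have ho : HasSum (fun i => wt ρ (s (2*i+1))) (ρ^4*(1-ρ) * (1-ρ^4)⁻¹) := by
    refine (hg.mul_left (ρ^4*(1-ρ))).congr_fun fun i => ?_
    rw [wt_s, if_pos (by omega), show 2*(2*i+1)+2 = 4*i+4 by ring, pow_add, pow_mul]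
    ring
  have hsum := HasSum.even_add_odd (f := fun k => wt ρ (s k)) he ho
  convert hsum using 1
  have hne : (1:ℝ) - ρ^4 ≠ 0 := by nlinarith
  have hne2 : ρ^3 + ρ^2 + ρ + 1 ≠ 0 := by positivity
  field_simp
  ring

theorem stmt10 (ρ : ℝ) (h0 : 0 ≤ ρ) (h1 : ρ < 1) :
    Filter.Tendsto
      (fun n : ℕ => ρ ^ (2*n+1) + ∑ᶠ a ∈ preim (n-1) [false, false, true], wt ρ a)
      Filter.atTop
      (nhds (ρ * (ρ^3 - ρ + 1) / (ρ^3 + ρ^2 + ρ + 1))) := by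
  have hfin : ∀ m : ℕ, ∑ᶠ a ∈ preim m [false, false, true], wt ρ a
      = ∑ k ∈ Finset.range (m+1), wt ρ (s k) := by
    intro m
    rw [preim_eq, finsum_mem_coe_finset, sum_E]
  have hsum := hasSum_wt_s ρ h0 h1
  have hB0 := hsum.tendsto_sum_nat
  have hB1 : Filter.Tendsto (fun m : ℕ => ∑ k ∈ Finset.range (m+1), wt ρ (s k))
      Filter.atTop (nhds (ρ * (ρ^3 - ρ + 1) / (ρ^3 + ρ^2 + ρ + 1))) :=
    hB0.comp (Filter.tendsto_add_atTop_nat 1)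
  have hB : Filter.Tendsto (fun n : ℕ => ∑ k ∈ Finset.range ((n-1)+1), wt ρ (s k))
      Filter.atTop (nhds (ρ * (ρ^3 - ρ + 1) / (ρ^3 + ρ^2 + ρ + 1))) :=
    hB1.comp (Filter.tendsto_sub_atTop_nat 1)
  have hA : Filter.Tendsto (fun n : ℕ => ρ ^ (2*n+1)) Filter.atTop (nhds 0) := by
    have h2 : ρ^2 < 1 := by nlinarith
    have h := (tendsto_pow_atTop_nhds_zero_of_lt_one (by positivity) h2).mul_const ρ
    rw [zero_mul] at h
    refine h.congr fun n => ?_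
    rw [← pow_mul, ← pow_succ]
  have := hA.add hB
  rw [zero_add] at this
  refine this.congr fun n => ?_
  rw [hfin]
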